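/- If a smooth embedded hypersurface Σ ⊂ ℝ^{m+1} with unit normal field ν satisfies the uniform ball condition of radius 𝖺 (for every p ∈ Σ the open balls B(p ± 𝖺 ν(p), 𝖺) do not meet Σ), then the map X : Σ × (−𝖺,𝖺) → ℝ^{m+1}, X(p,r) = p + r ν(p), is injective. -/

import Mathlib

/-!
Write `c = ⟪q - p, ν p⟫`. Since `q` lies outside both balls `B(p ± a ν p, a)`, expanding
`‖q - p ∓ a ν p‖² ≥ a²` gives `2a |c| ≤ ‖q - p‖²`, and likewise at `q`. If
`p + r ν p = q + s ν q`, then `q - p = r ν p - s ν q`, so pairing with `q - p` gives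
`2a ‖q - p‖² ≤ (|r| + |s|) ‖q - p‖²`, which forces `p = q` when `|r|, |s| < a`;
then `r = s` because `ν p ≠ 0`.
-/

open Metric RealInnerProductSpace

variable {E : Type*} [NormedAddCommGroup E] [InnerProductSpace ℝ E]

theorem two_mul_inner_le_norm_sq_of_notMem_ball {a : ℝ} (ha : 0 ≤ a) {p x v : E}
    (hv : ‖v‖ = 1) (hx : x ∉ ball (p + a • v) a) :
    2 * a * ⟪x - p, v⟫ ≤ ‖x - p‖ ^ 2 := by
  have hdist : a ≤ ‖(x - p) - a • v‖ := by
    rw [mem_ball, not_lt, dist_eq_norm] at hx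
    rwa [← sub_sub] at hx
  have hsq : a ^ 2 ≤ ‖(x - p) - a • v‖ ^ 2 := pow_le_pow_left₀ ha hdist 2
  rw [norm_sub_sq_real, real_inner_smul_right, norm_smul, hv, Real.norm_of_nonneg ha] at hsq
  linarith

theorem two_mul_abs_inner_le_norm_sq_of_notMem_balls {a : ℝ} (ha : 0 ≤ a) {p x v : E}
    (hv : ‖v‖ = 1) (hx_add : x ∉ ball (p + a • v) a) (hx_sub : x ∉ ball (p - a • v) a) :
    2 * a * |⟪x - p, v⟫| ≤ ‖x - p‖ ^ 2 := by
  have h_add := two_mul_inner_le_norm_sq_of_notMem_ball ha hv hx_add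
  have h_sub := two_mul_inner_le_norm_sq_of_notMem_ball ha (v := -v) (by rwa [norm_neg])
    (by rwa [smul_neg, ← sub_eq_add_neg])
  rw [inner_neg_right] at h_sub
  rcases abs_choice ⟪x - p, v⟫ with h | h <;> rw [h] <;> linarith

theorem eq_of_add_smul_eq_add_smul {a r s : ℝ} {p q v w : E} (hr : |r| < a) (hs : |s| < a)
    (hp : 2 * a * |⟪q - p, v⟫| ≤ ‖q - p‖ ^ 2) (hq : 2 * a * |⟪p - q, w⟫| ≤ ‖p - q‖ ^ 2)
    (h : p + r • v = q + s • w) : p = q := by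
  have hqp : q - p = r • v + s • (-w) := by
    rw [smul_neg, ← sub_eq_add_neg]
    linear_combination (norm := module) -h
  have hnorm : ‖q - p‖ ^ 2 = r * ⟪q - p, v⟫ + s * ⟪p - q, w⟫ := by
    rw [← real_inner_self_eq_norm_sq]
    nth_rw 2 [hqp]
    rw [inner_add_right, real_inner_smul_right, real_inner_smul_right, inner_neg_right,
      ← inner_neg_left, neg_sub]
  rw [norm_sub_rev] at hq
  have ha : 0 ≤ a := (abs_nonneg r).trans hr.le
  have hbound : 2 * a * ‖q - p‖ ^ 2 ≤ (|r| + |s|) * ‖q - p‖ ^ 2 :=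
    calc 2 * a * ‖q - p‖ ^ 2 = 2 * a * (r * ⟪q - p, v⟫ + s * ⟪p - q, w⟫) := by rw [hnorm]
      _ ≤ 2 * a * (|r| * |⟪q - p, v⟫| + |s| * |⟪p - q, w⟫|) := by
        refine mul_le_mul_of_nonneg_left ?_ (by positivity)
        rw [← abs_mul, ← abs_mul]
        exact (le_abs_self _).trans (abs_add_le _ _)
      _ = |r| * (2 * a * |⟪q - p, v⟫|) + |s| * (2 * a * |⟪p - q, w⟫|) := by ring
      _ ≤ |r| * ‖q - p‖ ^ 2 + |s| * ‖q - p‖ ^ 2 := by gcongr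
      _ = (|r| + |s|) * ‖q - p‖ ^ 2 := by ring
  have hsq : ‖q - p‖ ^ 2 = 0 := le_antisymm (by nlinarith [sq_nonneg ‖q - p‖]) (sq_nonneg _)
  rw [sq_eq_zero_iff, norm_sub_eq_zero_iff] at hsq
  exact hsq.symm

/-- If a hypersurface `S ⊂ ℝ^{m+1}` with unit normal field `ν` satisfies the uniform ball
condition of radius `a` (for every `p ∈ S` the open balls `B(p ± a ν(p), a)` do not meet `S`),
then the map `X : S × (−a,a) → ℝ^{m+1}`, `X(p,r) = p + r ν(p)`, is injective. -/
theorem stmt2 (m : ℕ) (a : ℝ) (ha : 0 < a)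
    (S : Set (EuclideanSpace ℝ (Fin (m + 1))))
    (ν : EuclideanSpace ℝ (Fin (m + 1)) → EuclideanSpace ℝ (Fin (m + 1)))
    (hν : ∀ p ∈ S, ‖ν p‖ = 1)
    (hball : ∀ p ∈ S, Metric.ball (p + a • ν p) a ∩ S = ∅ ∧
      Metric.ball (p - a • ν p) a ∩ S = ∅) :
    ∀ p ∈ S, ∀ q ∈ S, ∀ r ∈ Set.Ioo (-a) a, ∀ s ∈ Set.Ioo (-a) a,
      p + r • ν p = q + s • ν q → p = q ∧ r = s := by
  have hnormal : ∀ p ∈ S, ∀ x ∈ S, 2 * a * |⟪x - p, ν p⟫| ≤ ‖x - p‖ ^ 2 := fun p hp x hx =>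
    two_mul_abs_inner_le_norm_sq_of_notMem_balls ha.le (hν p hp)
      (fun h => (Set.eq_empty_iff_forall_notMem.mp (hball p hp).1) x ⟨h, hx⟩)
      (fun h => (Set.eq_empty_iff_forall_notMem.mp (hball p hp).2) x ⟨h, hx⟩)
  intro p hp q hq r hr s hs h
  obtain rfl : p = q := eq_of_add_smul_eq_add_smul (abs_lt.mpr hr) (abs_lt.mpr hs)
    (hnormal p hp q hq) (hnormal q hq p hp) h
  have hνp : ν p ≠ 0 := by simp [← norm_ne_zero_iff, hν p hp]
  exact ⟨rfl, smul_left_injective ℝ hνp (add_left_cancel h)⟩
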